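/- arXiv:2111.01736 — 3 statements merged into one kernel-verified Lean document; each statement's English description precedes it below -/
import Mathlib

section
/- Let p > 0, E > 0 and 0 < δ ≤ E. Let g, g_δ ∈ L²(ℝ, ℂ) satisfy ‖g − g_δ‖_{L²} ≤ δ. Let f ∈ L²(ℝ, ℂ) be the exact source, related to g through the Fourier transform by 𝓕f(ξ) = ξ²/(1 − e^{−ξ}) · 𝓕g(ξ) for a.e. ξ, and suppose f satisfies the a priori Sobolev bound (∫_ℝ |𝓕f(ξ)|² (1 + ξ²)^p dξ)^{1/2} ≤ E. Choose the regularization parameter μ = (δ/E)^{1/(p+2)} and let f_{δ,μ} ∈ L²(ℝ, ℂ) be the regularized solution determined by 𝓕f_{δ,μ}(ξ) = ξ²/((1 − e^{−ξ})(1 + ξ²μ²)) · 𝓕g_δ(ξ) for a.e. ξ. Then ‖f − f_{δ,μ}‖_{L²} ≤ 2 δ^{p/(p+2)} E^{2/(p+2)} (1 + (1/2) max{1, μ^{2−p}}). -/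
/-!
On the Fourier side the error splits pointwise as
`𝓕f - 𝓕f_{δ,μ} = q_μ · (𝓕g - 𝓕g_δ) + ξ²μ²/(1 + ξ²μ²) · 𝓕f`, with `q_μ` the regularized
multiplier. From `|ξ/(1 - e^{-ξ})| ≤ 1 + |ξ|` one gets `|q_μ| ≤ 3/(2μ²)` when `μ ≤ 1`, so the first
term has norm at most `3δ/(2μ²)`. The damping factor is at most
`μ^p max{1, μ^{2-p}} (1 + ξ²)^{p/2}`, so the a priori bound controls the second term by
`μ^p max{1, μ^{2-p}} E`. Finally `μ^{p+2} = δ/E` gives `δ/μ² = μ^p E = δ^{p/(p+2)} E^{2/(p+2)}`.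
-/

open MeasureTheory ENNReal Real

lemma abs_div_one_sub_exp_neg_le (x : ℝ) : |x / (1 - exp (-x))| ≤ 1 + |x| := by
  rcases lt_trichotomy x 0 with hx | rfl | hx
  · have h : 1 - exp (-x) ≤ x := by linarith [add_one_le_exp (-x)]
    rw [abs_div, abs_of_neg hx, abs_of_neg (by linarith), div_le_iff₀ (by linarith)]
    nlinarith
  · simp
  · have hexp : exp (-x) * exp x = 1 := by rw [← exp_add]; simp
    have h : x ≤ (1 - exp (-x)) * (1 + x) := by
      nlinarith [add_one_le_exp x, exp_pos (-x)]
    have hpos : 0 < 1 - exp (-x) := by linarith [exp_lt_one_iff.2 (neg_lt_zero.2 hx)]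
    rw [abs_div, abs_of_pos hx, abs_of_pos hpos, div_le_iff₀ hpos]
    linarith

lemma abs_mul_one_add_abs_le {μ : ℝ} (hμ0 : 0 < μ) (hμ1 : μ ≤ 1) (x : ℝ) :
    |x| * (1 + |x|) * (2 * μ ^ 2) ≤ 3 * (1 + x ^ 2 * μ ^ 2) := by
  have ha := abs_nonneg x
  have hsq : x ^ 2 = |x| ^ 2 := (sq_abs x).symm
  -- `2 μ |x| ≤ 1 + x² μ²` by AM-GM, and `μ² ≤ μ`
  nlinarith [sq_nonneg (|x| * μ - 1), mul_le_mul_of_nonneg_left hμ1 hμ0.le,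
    mul_nonneg ha (sub_nonneg.2 hμ1), mul_nonneg (mul_nonneg ha hμ0.le) (sub_nonneg.2 hμ1)]

lemma abs_regularized_multiplier_le {μ : ℝ} (hμ0 : 0 < μ) (hμ1 : μ ≤ 1) (x : ℝ) :
    |x ^ 2 / ((1 - exp (-x)) * (1 + x ^ 2 * μ ^ 2))| ≤ 3 / (2 * μ ^ 2) := by
  have hd : 0 < 1 + x ^ 2 * μ ^ 2 := by positivity
  have hsplit : x ^ 2 / ((1 - exp (-x)) * (1 + x ^ 2 * μ ^ 2)) =
      x * (x / (1 - exp (-x))) / (1 + x ^ 2 * μ ^ 2) := by rw [← div_div, sq, mul_div_assoc]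
  rw [hsplit, abs_div, abs_mul, abs_of_pos hd, div_le_div_iff₀ hd (by positivity)]
  calc |x| * |x / (1 - exp (-x))| * (2 * μ ^ 2) ≤ |x| * (1 + |x|) * (2 * μ ^ 2) := by
        gcongr; exact abs_div_one_sub_exp_neg_le x
    _ ≤ 3 * (1 + x ^ 2 * μ ^ 2) := abs_mul_one_add_abs_le hμ0 hμ1 x

lemma div_one_add_le_rpow {s a : ℝ} (hs : 0 ≤ s) (ha0 : 0 ≤ a) (ha1 : a ≤ 1) :
    s / (1 + s) ≤ s ^ a := by
  rcases le_total s 1 with h | h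
  · exact (div_le_self hs (by linarith)).trans (self_le_rpow_of_le_one hs h ha1)
  · exact ((div_le_one (by linarith)).2 (by linarith)).trans (one_le_rpow h ha0)

lemma sq_mul_sq_div_one_add_le {p μ : ℝ} (hp : 0 ≤ p) (hμ0 : 0 < μ) (x : ℝ) :
    x ^ 2 * μ ^ 2 / (1 + x ^ 2 * μ ^ 2) ≤ μ ^ p * max 1 (μ ^ (2 - p)) * (1 + x ^ 2) ^ (p / 2) := by
  have hμsq : ∀ a : ℝ, (μ ^ 2) ^ a = μ ^ (2 * a) := fun a => by
    rw [← Real.rpow_natCast, ← Real.rpow_mul hμ0.le]; norm_num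
  rcases le_total p 2 with hp2 | hp2
  · calc x ^ 2 * μ ^ 2 / (1 + x ^ 2 * μ ^ 2) ≤ (x ^ 2 * μ ^ 2) ^ (p / 2) :=
          div_one_add_le_rpow (by positivity) (by positivity) (by linarith)
      _ = μ ^ p * (x ^ 2) ^ (p / 2) := by
          rw [mul_rpow (by positivity) (by positivity), hμsq, mul_div_cancel₀ _ two_ne_zero,
            mul_comm]
      _ ≤ μ ^ p * (1 + x ^ 2) ^ (p / 2) := by gcongr; linarith
      _ ≤ μ ^ p * max 1 (μ ^ (2 - p)) * (1 + x ^ 2) ^ (p / 2) := by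
          gcongr
          exact le_mul_of_one_le_right (by positivity) (le_max_left _ _)
  · calc x ^ 2 * μ ^ 2 / (1 + x ^ 2 * μ ^ 2) ≤ x ^ 2 * μ ^ 2 :=
          div_le_self (by positivity) (by linarith [sq_nonneg (x * μ)])
      _ ≤ (1 + x ^ 2) ^ (p / 2) * μ ^ 2 := by
          have hx : x ^ 2 ≤ 1 + x ^ 2 := by linarith
          gcongr
          exact hx.trans (self_le_rpow_of_one_le (by linarith [sq_nonneg x]) (by linarith))
      _ = μ ^ p * μ ^ (2 - p) * (1 + x ^ 2) ^ (p / 2) := by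
          rw [← rpow_add hμ0]; norm_num; ring
      _ ≤ μ ^ p * max 1 (μ ^ (2 - p)) * (1 + x ^ 2) ^ (p / 2) := by
          gcongr; exact le_max_right _ _

lemma regularization_parameter_rpow_mul {p δ E μ : ℝ} (hp : p + 2 ≠ 0) (hδ : 0 < δ) (hE : 0 < E)
    (hμ : μ = (δ / E) ^ ((1 : ℝ) / (p + 2))) :
    μ ^ p * E = δ ^ (p / (p + 2)) * E ^ ((2 : ℝ) / (p + 2)) := by
  have hsplitE : E ^ (p / (p + 2)) * E ^ ((2 : ℝ) / (p + 2)) = E := by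
    rw [← rpow_add hE, ← add_div, div_self hp, Real.rpow_one]
  have hEpos : 0 < E ^ (p / (p + 2)) := by positivity
  calc μ ^ p * E = δ ^ (p / (p + 2)) / E ^ (p / (p + 2)) *
        (E ^ (p / (p + 2)) * E ^ ((2 : ℝ) / (p + 2))) := by
        rw [hsplitE, hμ, ← Real.rpow_mul (by positivity), one_div_mul_eq_div,
          div_rpow hδ.le hE.le]
    _ = δ ^ (p / (p + 2)) * E ^ ((2 : ℝ) / (p + 2)) := by field_simp

lemma div_regularization_parameter_sq {p δ E μ : ℝ} (hp : p + 2 ≠ 0) (hδ : 0 < δ) (hE : 0 < E)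
    (hμ : μ = (δ / E) ^ ((1 : ℝ) / (p + 2))) : δ / μ ^ 2 = μ ^ p * E := by
  have hμ0 : 0 < μ := hμ ▸ rpow_pos_of_pos (div_pos hδ hE) _
  have hpow : μ ^ p * μ ^ 2 = δ / E := by
    rw [← Real.rpow_two, ← rpow_add hμ0, hμ, ← Real.rpow_mul (by positivity),
      one_div_mul_cancel hp, Real.rpow_one]
  rw [div_eq_iff (by positivity), mul_right_comm, hpow, div_mul_cancel₀ _ hE.ne']

lemma regularization_error_terms_le {p δ E μ M : ℝ} (hp : p + 2 ≠ 0) (hδ : 0 < δ) (hE : 0 < E)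
    (hμ : μ = (δ / E) ^ ((1 : ℝ) / (p + 2))) :
    3 / (2 * μ ^ 2) * δ + μ ^ p * M * E ≤
      2 * δ ^ (p / (p + 2)) * E ^ ((2 : ℝ) / (p + 2)) * (1 + 1 / 2 * M) := by
  have hK : 0 ≤ δ ^ (p / (p + 2)) * E ^ ((2 : ℝ) / (p + 2)) := by positivity
  calc 3 / (2 * μ ^ 2) * δ + μ ^ p * M * E = 3 / 2 * (δ / μ ^ 2) + μ ^ p * E * M := by ring
    _ = 3 / 2 * (δ ^ (p / (p + 2)) * E ^ ((2 : ℝ) / (p + 2))) +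
          δ ^ (p / (p + 2)) * E ^ ((2 : ℝ) / (p + 2)) * M := by
        rw [div_regularization_parameter_sq hp hδ hE hμ,
          regularization_parameter_rpow_mul hp hδ hE hμ]
    _ ≤ 2 * δ ^ (p / (p + 2)) * E ^ ((2 : ℝ) / (p + 2)) * (1 + 1 / 2 * M) := by nlinarith

lemma sub_ofReal_div_mul_one_add_mul {a b s : ℝ} (hs : 1 + s ≠ 0) {u w w' : ℂ}
    (hu : u = ((a / b : ℝ) : ℂ) * w) :
    u - ((a / (b * (1 + s)) : ℝ) : ℂ) * w' =
      ((a / (b * (1 + s)) : ℝ) : ℂ) * (w - w') + ((s / (1 + s) : ℝ) : ℂ) * u := by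
  have hs' : (1 + s : ℂ) ≠ 0 := by exact_mod_cast hs
  subst hu
  rw [← div_div]
  push_cast
  field_simp
  ring

section

variable {α : Type*} [MeasurableSpace α] {ν : Measure α}

lemma Lp.norm_le_of_ae_eq_add {G : Type*} [NormedAddCommGroup G] {p : ℝ≥0∞} [Fact (1 ≤ p)]
    {F : Lp G p ν} {A B : α → G} (hA : AEStronglyMeasurable A ν) (hB : AEStronglyMeasurable B ν)
    (hF : F =ᵐ[ν] A + B) {a b : ℝ} (ha : 0 ≤ a) (hb : 0 ≤ b)
    (hAa : eLpNorm A p ν ≤ ENNReal.ofReal a) (hBb : eLpNorm B p ν ≤ ENNReal.ofReal b) :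
    ‖F‖ ≤ a + b := by
  rw [Lp.norm_def, eLpNorm_congr_ae hF]
  refine ENNReal.toReal_le_of_le_ofReal (by positivity) ?_
  calc eLpNorm (A + B) p ν ≤ eLpNorm A p ν + eLpNorm B p ν := eLpNorm_add_le hA hB Fact.out
    _ ≤ ENNReal.ofReal a + ENNReal.ofReal b := add_le_add hAa hBb
    _ = ENNReal.ofReal (a + b) := (ENNReal.ofReal_add ha hb).symm

lemma eLpNorm_ofReal_mul_le_of_abs_le {q : α → ℝ} {C : ℝ} (hC : 0 ≤ C) (hq : ∀ x, |q x| ≤ C)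
    {p : ℝ≥0∞} (F : Lp ℂ p ν) :
    eLpNorm (fun x => (q x : ℂ) * F x) p ν ≤ ENNReal.ofReal (C * ‖F‖) := by
  have hpt : ∀ᵐ x ∂ν, ‖(q x : ℂ) * F x‖ ≤ C * ‖F x‖ := .of_forall fun x => by
    rw [norm_mul, Complex.norm_real, Real.norm_eq_abs]
    exact mul_le_mul_of_nonneg_right (hq x) (norm_nonneg _)
  calc _ ≤ ENNReal.ofReal C * eLpNorm F p ν := eLpNorm_le_mul_eLpNorm_of_ae_le_mul hpt p
    _ = ENNReal.ofReal (C * ‖F‖) := by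
        rw [ENNReal.ofReal_mul hC, Lp.norm_def, ENNReal.ofReal_toReal (Lp.eLpNorm_ne_top F)]

lemma eLpNorm_ofReal_mul_le_of_weighted {c ω : α → ℝ} {u : α → ℂ} {C E : ℝ} (hC : 0 ≤ C)
    (hE : 0 ≤ E) (hω : ∀ x, 0 ≤ ω x) (hc : ∀ x, |c x| ≤ C * √(ω x))
    (hu : ∫⁻ x, ‖u x‖ₑ ^ 2 * ENNReal.ofReal (ω x) ∂ν ≤ ENNReal.ofReal (E ^ 2)) :
    eLpNorm (fun x => (c x : ℂ) * u x) 2 ν ≤ ENNReal.ofReal (C * E) := by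
  have hpt : ∀ x, ‖(c x : ℂ) * u x‖ₑ ^ (2 : ℝ) ≤
      ENNReal.ofReal (C ^ 2) * (‖u x‖ₑ ^ 2 * ENNReal.ofReal (ω x)) := fun x => by
    have hle : ‖(c x : ℂ) * u x‖ₑ ≤ ENNReal.ofReal (C * √(ω x)) * ‖u x‖ₑ := by
      rw [enorm_mul, ← ofReal_norm (c x : ℂ), Complex.norm_real, Real.norm_eq_abs]
      gcongr
      exact hc x
    calc _ ≤ (ENNReal.ofReal (C * √(ω x)) * ‖u x‖ₑ) ^ (2 : ℝ) := by gcongr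
      _ = _ := by
          rw [ENNReal.rpow_two, mul_pow, ← ENNReal.ofReal_pow (by positivity), mul_pow,
            Real.sq_sqrt (hω x), ENNReal.ofReal_mul (by positivity)]
          ring
  rw [eLpNorm_eq_lintegral_rpow_enorm_toReal two_ne_zero ofNat_ne_top, toReal_ofNat]
  calc (∫⁻ x, ‖(c x : ℂ) * u x‖ₑ ^ (2 : ℝ) ∂ν) ^ (1 / (2 : ℝ))
      ≤ ENNReal.ofReal ((C * E) ^ 2) ^ (1 / (2 : ℝ)) := by
        gcongr
        calc _ ≤ ∫⁻ x, ENNReal.ofReal (C ^ 2) * (‖u x‖ₑ ^ 2 * ENNReal.ofReal (ω x)) ∂ν :=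
              lintegral_mono hpt
          _ = ENNReal.ofReal (C ^ 2) * ∫⁻ x, ‖u x‖ₑ ^ 2 * ENNReal.ofReal (ω x) ∂ν :=
              lintegral_const_mul' _ _ ofReal_ne_top
          _ ≤ ENNReal.ofReal (C ^ 2) * ENNReal.ofReal (E ^ 2) := by gcongr
          _ = ENNReal.ofReal ((C * E) ^ 2) := by rw [← ENNReal.ofReal_mul (by positivity), mul_pow]
    _ = ENNReal.ofReal (C * E) := by
        rw [ENNReal.ofReal_rpow_of_nonneg (by positivity) (by norm_num), ← Real.sqrt_eq_rpow,
          Real.sqrt_sq (by positivity)]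

end

/-- Error estimate for the modified regularization method. Here `𝓕` denotes
the unitary Fourier–Plancherel transform on `L²(ℝ, ℂ)` (this version of
Mathlib does not contain it, so it is taken as an arbitrary unitary map of
`L²(ℝ, ℂ)`; the statement depends on the Fourier transform only through its
unitarity). Let `0 < δ ≤ E`, `p > 0`, and `g, g_δ, f, f_{δ,μ} ∈ L²(ℝ, ℂ)` with
`‖g − g_δ‖ ≤ δ`, `𝓕f(ξ) = ξ²/(1 − e^{−ξ})·𝓕g(ξ)` for a.e. `ξ ≠ 0`,
`∫ |𝓕f(ξ)|²(1 + ξ²)^p dξ ≤ E²`, and, with `μ = (δ/E)^{1/(p+2)}`,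
`𝓕f_{δ,μ}(ξ) = ξ²/((1 − e^{−ξ})(1 + ξ²μ²))·𝓕g_δ(ξ)` for a.e. `ξ ≠ 0`. Then
`‖f − f_{δ,μ}‖ ≤ 2δ^{p/(p+2)}E^{2/(p+2)}(1 + (1/2)max{1, μ^{2−p}})`. -/
theorem stmt_0 (p E δ μ : ℝ) (hp : 0 < p) (hE : 0 < E) (hδ : 0 < δ) (hδE : δ ≤ E)
    (𝓕 : Lp ℂ 2 (volume : Measure ℝ) ≃ₗᵢ[ℂ] Lp ℂ 2 (volume : Measure ℝ))
    (g gδ f fδμ : Lp ℂ 2 (volume : Measure ℝ))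
    (hμ : μ = (δ / E) ^ ((1 : ℝ) / (p + 2)))
    (hnoise : ‖g - gδ‖ ≤ δ)
    (hFf : ∀ᵐ ξ : ℝ, ξ ≠ 0 →
      (𝓕 f : ℝ → ℂ) ξ = ((ξ ^ 2 / (1 - Real.exp (-ξ)) : ℝ) : ℂ) * (𝓕 g : ℝ → ℂ) ξ)
    (hsob : ∫⁻ ξ : ℝ, (‖(𝓕 f : ℝ → ℂ) ξ‖₊ : ℝ≥0∞) ^ 2 *
        ENNReal.ofReal ((1 + ξ ^ 2) ^ p) ≤ ENNReal.ofReal (E ^ 2))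
    (hFfδμ : ∀ᵐ ξ : ℝ, ξ ≠ 0 →
      (𝓕 fδμ : ℝ → ℂ) ξ =
        ((ξ ^ 2 / ((1 - Real.exp (-ξ)) * (1 + ξ ^ 2 * μ ^ 2)) : ℝ) : ℂ) *
          (𝓕 gδ : ℝ → ℂ) ξ) :
    ‖f - fδμ‖ ≤
      2 * δ ^ (p / (p + 2)) * E ^ ((2 : ℝ) / (p + 2)) *
        (1 + (1 / 2) * max 1 (μ ^ (2 - p))) := by
  have hμ0 : 0 < μ := hμ ▸ rpow_pos_of_pos (div_pos hδ hE) _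
  have hμ1 : μ ≤ 1 :=
    hμ ▸ rpow_le_one (by positivity) (div_le_one_of_le₀ hδE hE.le) (by positivity)
  have hp2 : p + 2 ≠ 0 := by positivity
  set M := max 1 (μ ^ (2 - p))
  set q : ℝ → ℝ := fun ξ => ξ ^ 2 / ((1 - exp (-ξ)) * (1 + ξ ^ 2 * μ ^ 2))
  set c : ℝ → ℝ := fun ξ => ξ ^ 2 * μ ^ 2 / (1 + ξ ^ 2 * μ ^ 2)
  have hdecomp : (𝓕 f - 𝓕 fδμ : Lp ℂ 2 volume) =ᵐ[volume]
      (fun ξ => (q ξ : ℂ) * (𝓕 g - 𝓕 gδ) ξ) + fun ξ => (c ξ : ℂ) * 𝓕 f ξ := by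
    filter_upwards [hFf, hFfδμ, volume.ae_ne 0, Lp.coeFn_sub (𝓕 f) (𝓕 fδμ),
      Lp.coeFn_sub (𝓕 g) (𝓕 gδ)] with ξ hf hfδ hξ hsub hsub'
    rw [hsub, Pi.add_apply, hsub', Pi.sub_apply, Pi.sub_apply, hfδ hξ]
    exact sub_ofReal_div_mul_one_add_mul (by positivity) (hf hξ)
  have hA := eLpNorm_ofReal_mul_le_of_abs_le (by positivity)
    (abs_regularized_multiplier_le hμ0 hμ1) (𝓕 g - 𝓕 gδ)
  have hB := eLpNorm_ofReal_mul_le_of_weighted (c := c) (C := μ ^ p * M) (by positivity) hE.le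
    (fun ξ => by positivity) (fun ξ => by
      rw [abs_of_nonneg (by positivity), sqrt_eq_rpow, ← Real.rpow_mul (by positivity),
        mul_one_div]
      exact sq_mul_sq_div_one_add_le hp.le hμ0 ξ) hsob
  have hnoise' : ‖𝓕 g - 𝓕 gδ‖ ≤ δ := by rwa [← map_sub, 𝓕.norm_map]
  rw [← 𝓕.norm_map, map_sub]
  refine (Lp.norm_le_of_ae_eq_add (by fun_prop) (by fun_prop) hdecomp (by positivity)
    (by positivity) hA hB).trans ?_
  exact le_trans (by gcongr) (regularization_error_terms_le hp2 hδ hE hμ)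
end

section
/- Let p > 0, μ > 0, E > 0 and let F ∈ L²(ℝ, ℂ) satisfy ∫_ℝ |F(ξ)|² (1 + ξ²)^p dξ ≤ E². Then ‖F(ξ) − F(ξ)/(1 + μ²ξ²)‖_{L²} ≤ E max{μ², μ^p}. -/
/-!
On the Fourier side the bias is the multiplier `r(ξ) = μ²ξ²/(1 + μ²ξ²)` applied to `F`. Since
`r ≤ min 1 (μ²(1 + ξ²))` and, for `y = 1 + ξ² ≥ 1`, `min 1 (μ² y) ≤ max (μ², μ^p) y^{p/2}`
(split on `μ² y ≤ 1` and on `p ≥ 2`), we get `|r|² ≤ max (μ², μ^p)² (1 + ξ²)^p`; integrating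
against `|F|²` and using the Sobolev bound finishes the proof.
-/

open MeasureTheory ENNReal

theorem min_one_mul_le_max_mul_rpow {a y q : ℝ} (ha : 0 ≤ a) (hy : 1 ≤ y) (hq : 0 < q) :
    min 1 (a * y) ≤ max a (a ^ q) * y ^ q := by
  have hyq : 0 ≤ y ^ q := Real.rpow_nonneg (by linarith) q
  rcases le_total 1 (a * y) with hay | hay
  · calc min 1 (a * y) ≤ 1 := min_le_left _ _
      _ ≤ (a * y) ^ q := Real.one_le_rpow hay hq.le
      _ = a ^ q * y ^ q := Real.mul_rpow ha (by linarith)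
      _ ≤ max a (a ^ q) * y ^ q := by gcongr; exact le_max_right _ _
  rcases le_total 1 q with hq1 | hq1
  · calc min 1 (a * y) ≤ a * y := min_le_right _ _
      _ ≤ a * y ^ q := by gcongr; exact Real.self_le_rpow_of_one_le hy hq1
      _ ≤ max a (a ^ q) * y ^ q := by gcongr; exact le_max_left _ _
  · calc min 1 (a * y) ≤ a * y := min_le_right _ _
      _ ≤ (a * y) ^ q := Real.self_le_rpow_of_le_one (by positivity) hay hq1
      _ = a ^ q * y ^ q := Real.mul_rpow ha (by linarith)
      _ ≤ max a (a ^ q) * y ^ q := by gcongr; exact le_max_right _ _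

theorem div_one_add_le_max_mul_rpow {p μ : ℝ} (hp : 0 < p) (hμ : 0 < μ) (ξ : ℝ) :
    μ ^ 2 * ξ ^ 2 / (1 + μ ^ 2 * ξ ^ 2) ≤ max (μ ^ 2) (μ ^ p) * (1 + ξ ^ 2) ^ (p / 2) := by
  have hpos : 0 < 1 + μ ^ 2 * ξ ^ 2 := by positivity
  have hμp : μ ^ p = (μ ^ 2) ^ (p / 2) := by
    rw [← Real.rpow_natCast, ← Real.rpow_mul hμ.le]; ring_nf
  calc μ ^ 2 * ξ ^ 2 / (1 + μ ^ 2 * ξ ^ 2) ≤ min 1 (μ ^ 2 * (1 + ξ ^ 2)) := by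
        have ht : 0 ≤ μ ^ 2 * ξ ^ 2 := by positivity
        refine le_min ((div_le_one hpos).2 (by linarith)) ?_
        rw [div_le_iff₀ hpos]
        nlinarith [mul_nonneg ht (sq_nonneg μ), sq_nonneg μ]
    _ ≤ max (μ ^ 2) (μ ^ p) * (1 + ξ ^ 2) ^ (p / 2) := by
        rw [hμp]
        exact min_one_mul_le_max_mul_rpow (sq_nonneg μ) (by nlinarith [sq_nonneg ξ]) (by linarith)

theorem enorm_sub_div_one_add_sq_le {p μ : ℝ} (hp : 0 < p) (hμ : 0 < μ) (z : ℂ) (ξ : ℝ) :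
    ‖z - z / ((1 + μ ^ 2 * ξ ^ 2 : ℝ) : ℂ)‖ₑ ^ 2 ≤
      ENNReal.ofReal (max (μ ^ 2) (μ ^ p)) ^ 2 *
        (‖z‖ₑ ^ 2 * ENNReal.ofReal ((1 + ξ ^ 2) ^ p)) := by
  set r := μ ^ 2 * ξ ^ 2 / (1 + μ ^ 2 * ξ ^ 2)
  have hpos : 0 < 1 + μ ^ 2 * ξ ^ 2 := by positivity
  have hmul : z - z / ((1 + μ ^ 2 * ξ ^ 2 : ℝ) : ℂ) = z * (r : ℂ) := by
    have : (1 + (μ : ℂ) ^ 2 * (ξ : ℂ) ^ 2) ≠ 0 := by exact_mod_cast hpos.ne'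
    simp only [r]
    push_cast
    field_simp
    ring
  have hr : r ^ 2 ≤ max (μ ^ 2) (μ ^ p) ^ 2 * (1 + ξ ^ 2) ^ p := by
    have hw : ((1 + ξ ^ 2) ^ (p / 2)) ^ 2 = (1 + ξ ^ 2) ^ p := by
      rw [← Real.rpow_natCast, ← Real.rpow_mul (by positivity)]; norm_num
    rw [← hw, ← mul_pow]
    exact pow_le_pow_left₀ (by positivity) (div_one_add_le_max_mul_rpow hp hμ ξ) 2
  rw [hmul, enorm_mul, mul_pow, mul_left_comm]
  gcongr
  rw [← ofReal_norm, Complex.norm_real, Real.norm_of_nonneg (by positivity),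
    ← ENNReal.ofReal_pow (by positivity), ← ENNReal.ofReal_pow (by positivity),
    ← ENNReal.ofReal_mul (by positivity)]
  exact ENNReal.ofReal_le_ofReal hr

theorem eLpNorm_two_le_of_enorm_sq_le {α G : Type*} [MeasurableSpace α] [NormedAddCommGroup G]
    {μ : Measure α} {g : α → G} {f : α → ℝ≥0∞} {c B : ℝ≥0∞} (hc : c ≠ ∞)
    (hg : ∀ x, ‖g x‖ₑ ^ 2 ≤ c ^ 2 * f x) (hf : ∫⁻ x, f x ∂μ ≤ B ^ 2) :
    eLpNorm g 2 μ ≤ c * B := by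
  calc eLpNorm g 2 μ = (∫⁻ x, ‖g x‖ₑ ^ 2 ∂μ) ^ (1 / 2 : ℝ) := by
        simp [eLpNorm_eq_lintegral_rpow_enorm_toReal two_ne_zero ofNat_ne_top]
    _ ≤ (∫⁻ x, c ^ 2 * f x ∂μ) ^ (1 / 2 : ℝ) := by gcongr with x; exact hg x
    _ = (c ^ 2 * ∫⁻ x, f x ∂μ) ^ (1 / 2 : ℝ) := by
        rw [lintegral_const_mul' _ _ (pow_ne_top hc)]
    _ ≤ ((c * B) ^ 2) ^ (1 / 2 : ℝ) := by rw [mul_pow]; gcongr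
    _ = c * B := by
        rw [← ENNReal.rpow_natCast, ← ENNReal.rpow_mul]; norm_num

theorem stmt_6_general (p μ E : ℝ) (hp : 0 < p) (hμ : 0 < μ) (hE : 0 < E) (F : ℝ → ℂ)
    (hsob : ∫⁻ ξ : ℝ, (‖F ξ‖₊ : ℝ≥0∞) ^ 2 * ENNReal.ofReal ((1 + ξ ^ 2) ^ p) ≤
      ENNReal.ofReal (E ^ 2)) :
    eLpNorm (fun ξ : ℝ => F ξ - F ξ / ((1 + μ ^ 2 * ξ ^ 2 : ℝ) : ℂ)) 2
        (volume : Measure ℝ) ≤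
      ENNReal.ofReal (E * max (μ ^ 2) (μ ^ p)) := by
  rw [ENNReal.ofReal_pow hE.le] at hsob
  rw [mul_comm, ENNReal.ofReal_mul (by positivity)]
  exact eLpNorm_two_le_of_enorm_sq_le ofReal_ne_top
    (fun ξ => enorm_sub_div_one_add_sq_le hp hμ (F ξ) ξ) hsob

/-- Bias estimate: if `F ∈ L²(ℝ, ℂ)` satisfies the a priori Sobolev bound
`∫ |F(ξ)|²(1 + ξ²)^p dξ ≤ E²`, then
`‖F(ξ) − F(ξ)/(1 + μ²ξ²)‖_{L²} ≤ E·max{μ², μ^p}`. -/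
theorem stmt_6 (p μ E : ℝ) (hp : 0 < p) (hμ : 0 < μ) (hE : 0 < E) (F : ℝ → ℂ)
    (hF : MemLp F 2 (volume : Measure ℝ))
    (hsob : ∫⁻ ξ : ℝ, (‖F ξ‖₊ : ℝ≥0∞) ^ 2 * ENNReal.ofReal ((1 + ξ ^ 2) ^ p) ≤
      ENNReal.ofReal (E ^ 2)) :
    eLpNorm (fun ξ : ℝ => F ξ - F ξ / ((1 + μ ^ 2 * ξ ^ 2 : ℝ) : ℂ)) 2
        (volume : Measure ℝ) ≤
      ENNReal.ofReal (E * max (μ ^ 2) (μ ^ p)) :=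
  stmt_6_general p μ E hp hμ hE F hsob
end

section
/- Let a > 0, μ > 0 and c ∈ ℝ. Suppose w : ℝ → ℝ is twice differentiable on [0, ∞), bounded on [0, ∞), satisfies w(0) = 0, and satisfies −w''(y) + a² w(y) = (1 + μ²a²) c for all y ≥ 0. Then c = a² w(1)/((1 − e^{−a})(1 + μ²a²)). -/
/-!
Writing `K = (1 + μ²a²)c`, the shifted function `v = w - K/a²` solves `v'' = a²v`. Both
`v' + av` and `v' - av` then solve first-order linear equations, so they are multiples of
`e^{ay}` and `e^{-ay}`; as `v` and the decaying part are bounded, the growing part vanishes and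
`v(y) = v(0)e^{-ay} = -(K/a²)e^{-ay}`. Evaluating at `y = 1` gives `w(1) = (K/a²)(1 - e^{-a})`.
-/

open Set Real Filter

theorem eq_mul_exp_of_hasDerivWithinAt_eq_mul {f : ℝ → ℝ} {k t₀ : ℝ}
    (hf : ∀ t ∈ Ici t₀, HasDerivWithinAt f (k * f t) (Ici t₀) t) :
    ∀ t ∈ Ici t₀, f t = f t₀ * exp (k * (t - t₀)) := by
  set g : ℝ → ℝ := fun t => exp (-k * (t - t₀)) * f t
  have hg : ∀ t ∈ Ici t₀, HasDerivWithinAt g 0 (Ici t₀) t := fun t ht => by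
    have hexp : HasDerivAt (fun t => exp (-k * (t - t₀))) (exp (-k * (t - t₀)) * -k) t := by
      simpa using ((hasDerivAt_id t).sub_const t₀).const_mul (-k) |>.exp
    exact (hexp.hasDerivWithinAt.mul (hf t ht)).congr_deriv (by ring)
  intro t ht
  have hconst := constant_of_has_deriv_right_zero (f := g)
    (fun x hx => (hg x hx.1).continuousWithinAt.mono Icc_subset_Ici_self)
    (fun x hx => (hg x hx.1).mono (Ici_subset_Ici.2 hx.1)) t ⟨ht, le_rfl⟩
  simp only [g, sub_self, mul_zero, exp_zero, one_mul] at hconst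
  rw [← hconst, mul_comm, ← mul_assoc, ← exp_add]
  simp

theorem eq_zero_of_abs_mul_exp_le {a C M : ℝ} (ha : 0 < a)
    (hbdd : ∀ y ∈ Ici (0 : ℝ), |C * exp (a * y)| ≤ M) : C = 0 := by
  by_contra hC
  have htendsto : Tendsto (fun y => |C| * exp (a * y)) atTop atTop :=
    (tendsto_exp_atTop.comp (tendsto_id.const_mul_atTop ha)).const_mul_atTop (abs_pos.2 hC)
  obtain ⟨y, hlarge, hy⟩ :=
    ((htendsto.eventually_gt_atTop M).and (eventually_ge_atTop 0)).exists
  have := hbdd y hy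
  rw [abs_mul, abs_of_pos (exp_pos _)] at this
  linarith

theorem eq_mul_exp_neg_of_deriv_deriv_eq_sq_mul {a : ℝ} (ha : 0 < a) {v v' v'' : ℝ → ℝ}
    (hv' : ∀ y ∈ Ici (0 : ℝ), HasDerivWithinAt v (v' y) (Ici 0) y)
    (hv'' : ∀ y ∈ Ici (0 : ℝ), HasDerivWithinAt v' (v'' y) (Ici 0) y)
    (hbdd : ∃ M : ℝ, ∀ y ∈ Ici (0 : ℝ), |v y| ≤ M)
    (hode : ∀ y ∈ Ici (0 : ℝ), v'' y = a ^ 2 * v y) :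
    ∀ y ∈ Ici (0 : ℝ), v y = v 0 * exp (-a * y) := by
  obtain ⟨M, hM⟩ := hbdd
  have hgrow := eq_mul_exp_of_hasDerivWithinAt_eq_mul (f := fun y => v' y + a * v y) (k := a)
    fun y hy =>
      ((hv'' y hy).add ((hv' y hy).const_mul a)).congr_deriv (by rw [hode y hy]; ring)
  have hdecay := eq_mul_exp_of_hasDerivWithinAt_eq_mul (f := fun y => v' y - a * v y) (k := -a)
    fun y hy =>
      ((hv'' y hy).sub ((hv' y hy).const_mul a)).congr_deriv (by rw [hode y hy]; ring)
  simp only [sub_zero] at hgrow hdecay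
  have hv_eq : ∀ y ∈ Ici (0 : ℝ), 2 * a * v y =
      (v' 0 + a * v 0) * exp (a * y) - (v' 0 - a * v 0) * exp (-a * y) := fun y hy => by
    rw [← hgrow y hy, ← hdecay y hy]; ring
  have hgrow_zero : v' 0 + a * v 0 = 0 := by
    refine eq_zero_of_abs_mul_exp_le ha (M := 2 * a * M + |v' 0 - a * v 0|) fun y hy => ?_
    have hexp : exp (-a * y) ≤ 1 := exp_le_one_iff.2 (by nlinarith [mem_Ici.1 hy])
    calc |(v' 0 + a * v 0) * exp (a * y)|
        = |2 * a * v y + (v' 0 - a * v 0) * exp (-a * y)| := by rw [hv_eq y hy]; ring_nf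
      _ ≤ 2 * a * |v y| + |v' 0 - a * v 0| * exp (-a * y) := by
          refine (abs_add_le _ _).trans_eq ?_
          rw [abs_mul (2 * a), abs_mul (v' 0 - a * v 0), abs_of_pos (by positivity : 0 < 2 * a),
            abs_of_pos (exp_pos _)]
      _ ≤ 2 * a * M + |v' 0 - a * v 0| := by
          gcongr
          exacts [hM y hy, mul_le_of_le_one_right (abs_nonneg _) hexp]
  intro y hy
  have h0 := hv_eq 0 self_mem_Ici
  have hy' := hv_eq y hy
  simp only [mul_zero, exp_zero, mul_one, hgrow_zero, zero_mul, zero_sub] at h0 hy'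
  have ha2 : 2 * a ≠ 0 := by positivity
  apply mul_left_cancel₀ ha2
  rw [hy', ← mul_assoc, h0]; ring

theorem stmt_11_general (a μ c : ℝ) (ha : 0 < a) (w w' w'' : ℝ → ℝ)
    (hw' : ∀ y ∈ Set.Ici (0 : ℝ), HasDerivWithinAt w (w' y) (Set.Ici 0) y)
    (hw'' : ∀ y ∈ Set.Ici (0 : ℝ), HasDerivWithinAt w' (w'' y) (Set.Ici 0) y)
    (hbdd : ∃ M : ℝ, ∀ y ∈ Set.Ici (0 : ℝ), |w y| ≤ M)
    (h0 : w 0 = 0)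
    (hode : ∀ y ∈ Set.Ici (0 : ℝ), -w'' y + a ^ 2 * w y = (1 + μ ^ 2 * a ^ 2) * c) :
    c = a ^ 2 * w 1 / ((1 - Real.exp (-a)) * (1 + μ ^ 2 * a ^ 2)) := by
  set K := (1 + μ ^ 2 * a ^ 2) * c
  obtain ⟨M, hM⟩ := hbdd
  have hdecay := eq_mul_exp_neg_of_deriv_deriv_eq_sq_mul ha (v := fun y => w y - K / a ^ 2)
    (fun y hy => (hw' y hy).sub_const _) hw''
    ⟨M + |K / a ^ 2|, fun y hy => (abs_sub _ _).trans (by gcongr; exact hM y hy)⟩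
    (fun y hy => by have := hode y hy; field_simp; linarith)
    1 (mem_Ici.2 zero_le_one)
  simp only [h0, mul_one] at hdecay
  have hexp : exp (-a) < 1 := exp_lt_one_iff.2 (neg_lt_zero.2 ha)
  have hexp_ne : 1 - exp (-a) ≠ 0 := by linarith
  rw [eq_div_iff (by positivity), sub_eq_iff_eq_add.1 hdecay]
  field_simp
  ring

/-- Per-frequency version of the regularized problem: let `a > 0`, `μ > 0`,
`c ∈ ℝ`. If `w : ℝ → ℝ` is twice differentiable on `[0, ∞)` (with first
derivative `w'` and second derivative `w''` there), bounded on `[0, ∞)`,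
satisfies `w 0 = 0` and `−w'' + a²w = (1 + μ²a²)c` on `[0, ∞)`, then
`c = a² w(1)/((1 − e^{−a})(1 + μ²a²))`. -/
theorem stmt_11 (a μ c : ℝ) (ha : 0 < a) (hμ : 0 < μ) (w w' w'' : ℝ → ℝ)
    (hw' : ∀ y ∈ Set.Ici (0 : ℝ), HasDerivWithinAt w (w' y) (Set.Ici 0) y)
    (hw'' : ∀ y ∈ Set.Ici (0 : ℝ), HasDerivWithinAt w' (w'' y) (Set.Ici 0) y)
    (hbdd : ∃ M : ℝ, ∀ y ∈ Set.Ici (0 : ℝ), |w y| ≤ M)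
    (h0 : w 0 = 0)
    (hode : ∀ y ∈ Set.Ici (0 : ℝ), -w'' y + a ^ 2 * w y = (1 + μ ^ 2 * a ^ 2) * c) :
    c = a ^ 2 * w 1 / ((1 - Real.exp (-a)) * (1 + μ ^ 2 * a ^ 2)) :=
  stmt_11_general a μ c ha w w' w'' hw' hw'' hbdd h0 hode
end
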